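/- Let K = 2^m. If S is a finite multiset of powers of 2, each at most K, with total sum at least K, then there exists a sub-multiset S' of S whose sum is exactly K. -/

import Mathlib

/-!
Induction on `m`. If `S` contains `2 ^ (m + 1)` itself we are done; otherwise every element is at
most `2 ^ m`, so the induction hypothesis extracts a sub-multiset of sum `2 ^ m`, and the remainder
still has sum at least `2 ^ m`, so it yields a second, disjoint one.
-/

theorem Multiset.exists_le_sum_eq_two_pow (m : ℕ) (S : Multiset ℕ)
    (hpow : ∀ x ∈ S, ∃ a ≤ m, x = 2 ^ a) (hsum : 2 ^ m ≤ S.sum) :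
    ∃ T ≤ S, T.sum = 2 ^ m := by
  induction m generalizing S with
  | zero =>
    obtain ⟨x, hx⟩ := Multiset.exists_mem_of_ne_zero (s := S) (by rintro rfl; simp at hsum)
    obtain ⟨a, ha, rfl⟩ := hpow x hx
    exact ⟨{2 ^ a}, Multiset.singleton_le.mpr hx, by simp [Nat.le_zero.mp ha]⟩
  | succ m ih =>
    by_cases htop : 2 ^ (m + 1) ∈ S
    · exact ⟨{2 ^ (m + 1)}, Multiset.singleton_le.mpr htop, Multiset.sum_singleton _⟩
    have hsmall : ∀ x ∈ S, ∃ a ≤ m, x = 2 ^ a := by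
      intro x hx
      obtain ⟨a, ha, rfl⟩ := hpow x hx
      refine ⟨a, Nat.le_of_lt_succ (lt_of_le_of_ne ha ?_), rfl⟩
      rintro rfl
      exact htop hx
    have hsum' : 2 ^ m ≤ S.sum := le_trans (Nat.pow_le_pow_right two_pos m.le_succ) hsum
    obtain ⟨T₁, hT₁, hT₁sum⟩ := ih S hsmall hsum'
    obtain ⟨R, rfl⟩ := Multiset.le_iff_exists_add.mp hT₁
    have hRsum : 2 ^ m ≤ R.sum := by
      rw [Multiset.sum_add, hT₁sum, pow_succ] at hsum
      omega
    obtain ⟨T₂, hT₂, hT₂sum⟩ := ih R (fun x hx => hsmall x (Multiset.mem_add.mpr (Or.inr hx))) hRsum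
    refine ⟨T₁ + T₂, add_le_add_right hT₂ T₁, ?_⟩
    rw [Multiset.sum_add, hT₁sum, hT₂sum, pow_succ, mul_two]

theorem stmt_1 (m K : ℕ) (hK : K = 2 ^ m) (S : Multiset ℕ)
    (hpow : ∀ x ∈ S, (∃ a : ℕ, x = 2 ^ a) ∧ x ≤ K)
    (hsum : K ≤ S.sum) :
    ∃ S' : Multiset ℕ, S' ≤ S ∧ S'.sum = K := by
  subst hK
  refine Multiset.exists_le_sum_eq_two_pow m S (fun x hx => ?_) hsum
  obtain ⟨⟨a, rfl⟩, hle⟩ := hpow x hx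
  exact ⟨a, (Nat.pow_le_pow_iff_right one_lt_two).mp hle, rfl⟩
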